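/- arXiv:2605.20964 — 8 statements merged into one kernel-verified Lean document; each statement's English description precedes it below -/
import Mathlib

section
/- Let n ≥ 3, B₁, B₂ ≥ 0, and set s̃ = ((n-1)(B₁+B₂) + sqrt((n-1)²(B₁+B₂)² - 4n(n-2)B₁B₂)) / (2n). Then for all real numbers a, b: B₁·a² + B₂·b² ≤ s̃·(a² + b² + (a+b)²/(n-2)). -/
open Real

set_option maxHeartbeats 1000000

theorem stmt_1 (n : ℕ) (hn : 3 ≤ n) (B₁ B₂ : ℝ) (hB₁ : 0 ≤ B₁) (hB₂ : 0 ≤ B₂) (a b : ℝ) :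
    B₁ * a ^ 2 + B₂ * b ^ 2 ≤
      ((((n : ℝ) - 1) * (B₁ + B₂) +
          Real.sqrt (((n : ℝ) - 1) ^ 2 * (B₁ + B₂) ^ 2 - 4 * (n : ℝ) * ((n : ℝ) - 2) * B₁ * B₂)) /
        (2 * (n : ℝ))) *
      (a ^ 2 + b ^ 2 + (a + b) ^ 2 / ((n : ℝ) - 2)) := by
  have hn3 : (3:ℝ) ≤ (n:ℝ) := by exact_mod_cast hn
  set N : ℝ := (n:ℝ) with hN
  set D : ℝ := (N - 1) ^ 2 * (B₁ + B₂) ^ 2 - 4 * N * (N - 2) * B₁ * B₂ with hD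
  have hDnn : 0 ≤ D := by
    have h1 : 0 ≤ N * (N - 2) * (B₁ - B₂)^2 :=
      mul_nonneg (mul_nonneg (by linarith) (by linarith)) (sq_nonneg _)
    nlinarith [sq_nonneg (B₁ + B₂)]
  set S : ℝ := Real.sqrt D with hSdef
  have hS0 : 0 ≤ S := Real.sqrt_nonneg _
  have hS2 : S ^ 2 = D := Real.sq_sqrt hDnn
  have hB12 : 0 ≤ B₁ * B₂ := mul_nonneg hB₁ hB₂
  have hS1 : (N - 1) * (B₁ - B₂) ≤ S := by nlinarith [hS2, hS0, hB12]
  have hS1' : (N - 1) * (B₂ - B₁) ≤ S := by nlinarith [hS2, hS0, hB12]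
  set X : ℝ := (N - 1) * (B₁ + B₂) + S with hXdef
  have hX0 : 0 ≤ X := by
    have : 0 ≤ (N - 1) * (B₁ + B₂) := mul_nonneg (by linarith) (by linarith)
    linarith
  have hX2 : X ^ 2 = 2 * (N - 1) * (B₁ + B₂) * X - 4 * N * (N - 2) * B₁ * B₂ := by
    simp only [hXdef, hD] at *
    linear_combination hS2
  set A : ℝ := (N - 1) * X - 2 * N * (N - 2) * B₁ with hAdef
  set B : ℝ := (N - 1) * X - 2 * N * (N - 2) * B₂ with hBdef
  have hA : 0 ≤ A := by
    have h1 := mul_le_mul_of_nonneg_left hS1 (show (0:ℝ) ≤ N - 1 by linarith)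
    simp only [hAdef, hXdef]
    nlinarith [h1, hB₁]
  have hB : 0 ≤ B := by
    have h1 := mul_le_mul_of_nonneg_left hS1' (show (0:ℝ) ≤ N - 1 by linarith)
    simp only [hBdef, hXdef]
    nlinarith [h1, hB₂]
  have hAB : A * B = X ^ 2 := by
    simp only [hAdef, hBdef]
    linear_combination (N * (N - 2)) * hX2
  have key : 0 ≤ A * a ^ 2 + 2 * X * (a * b) + B * b ^ 2 := by
    rcases eq_or_lt_of_le hA with hA0 | hA0
    · have hXz : X = 0 := by
        have : X ^ 2 = 0 := by rw [← hAB, ← hA0]; ring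
        exact pow_eq_zero_iff (by norm_num) |>.mp this
      rw [← hA0, hXz]
      nlinarith [sq_nonneg b, hB]
    · nlinarith [sq_nonneg (A * a + X * b), hAB, hA0]
  have hden : (0:ℝ) < 2 * N * (N - 2) := by nlinarith
  have hrw : (X / (2 * N)) * (a ^ 2 + b ^ 2 + (a + b) ^ 2 / (N - 2)) =
      (A * a ^ 2 + 2 * X * (a * b) + B * b ^ 2) / (2 * N * (N - 2)) +
        (B₁ * a ^ 2 + B₂ * b ^ 2) := by
    have h2N : (2 * N) ≠ 0 := by positivity
    have hN2 : (N - 2) ≠ 0 := by linarith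
    simp only [hAdef, hBdef]
    field_simp
    ring
  calc B₁ * a ^ 2 + B₂ * b ^ 2
      ≤ (A * a ^ 2 + 2 * X * (a * b) + B * b ^ 2) / (2 * N * (N - 2)) +
        (B₁ * a ^ 2 + B₂ * b ^ 2) := by
        have := div_nonneg key (le_of_lt hden)
        linarith
    _ = (X / (2 * N)) * (a ^ 2 + b ^ 2 + (a + b) ^ 2 / (N - 2)) := hrw.symm
end

section
/- For θ ∈ (0, π), n ≥ 2, and k with 0 < k ≤ 1 when n = 2 and 0 < k ≤ 1/(n-2) when n ≥ 3, define s(k,n,θ) = ((n-1)(2 - k sin²θ) + sqrt(4(1 - k sin²θ) + (n-1)² k² sin⁴θ)) / (2n). Then 1 + k cos²θ - k|cos θ| - s(k,n,θ) > 0. -/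
open Real

set_option maxHeartbeats 1600000 in
theorem stmt_3 (n : ℕ) (hn : 2 ≤ n) (θ k : ℝ) (hθ : θ ∈ Set.Ioo 0 Real.pi)
    (hk0 : 0 < k) (hk2 : n = 2 → k ≤ 1) (hk3 : 3 ≤ n → k ≤ 1 / ((n : ℝ) - 2)) :
    0 < 1 + k * Real.cos θ ^ 2 - k * |Real.cos θ| -
      (((n : ℝ) - 1) * (2 - k * Real.sin θ ^ 2) +
          Real.sqrt (4 * (1 - k * Real.sin θ ^ 2) + ((n : ℝ) - 1) ^ 2 * k ^ 2 * Real.sin θ ^ 4)) /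
        (2 * (n : ℝ)) := by
  obtain ⟨hθ0, hθπ⟩ := hθ
  have hsin : 0 < Real.sin θ := Real.sin_pos_of_pos_of_lt_pi hθ0 hθπ
  set c : ℝ := |Real.cos θ| with hcdef
  have hc0 : 0 ≤ c := abs_nonneg _
  have hpyth := Real.sin_sq_add_cos_sq θ
  have hcos2 : Real.cos θ ^ 2 = c ^ 2 := (sq_abs _).symm
  have hs2 : Real.sin θ ^ 2 = 1 - c ^ 2 := by
    rw [hcdef, sq_abs]; linarith
  have hc1 : c < 1 := by nlinarith
  have hs4 : Real.sin θ ^ 4 = (1 - c ^ 2) ^ 2 := by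
    rw [show Real.sin θ ^ 4 = (Real.sin θ ^ 2) ^ 2 by ring, hs2]
  have hn2 : (2 : ℝ) ≤ (n : ℝ) := by exact_mod_cast hn
  -- k ≤ 1 in all cases
  have hk1 : k ≤ 1 := by
    rcases eq_or_lt_of_le hn with h | h
    · exact hk2 h.symm
    · have h3 : 3 ≤ n := h
      have hk' := hk3 h3
      have hn3 : (3 : ℝ) ≤ (n : ℝ) := by exact_mod_cast h3
      have : (1 : ℝ) / ((n : ℝ) - 2) ≤ 1 := by
        rw [div_le_one (by linarith)]; linarith
      linarith
  set L : ℝ := 2 * (n : ℝ) * (1 + k * c ^ 2 - k * c) - ((n : ℝ) - 1) * (2 - k * (1 - c ^ 2))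
    with hLdef
  have hL : 0 < L := by
    have h1 : 0 ≤ k * ((n : ℝ) - ((n : ℝ) + 1) * c) ^ 2 :=
      mul_nonneg hk0.le (sq_nonneg _)
    nlinarith [mul_nonneg hk0.le hc0]
  -- positivity of g = 1 + k c^2 - (n-1) k c
  have hg : 0 < 1 + k * c ^ 2 - ((n : ℝ) - 1) * k * c := by
    rcases eq_or_lt_of_le hn with h | h
    · have hn' : (n : ℝ) = 2 := by exact_mod_cast h.symm
      rw [hn']
      nlinarith [mul_nonneg hk0.le (sq_nonneg (2 * c - 1))]
    · have h3 : 3 ≤ n := h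
      have hn3 : (3 : ℝ) ≤ (n : ℝ) := by exact_mod_cast h3
      have hk' : k * ((n : ℝ) - 2) ≤ 1 := by
        have := hk3 h3
        rw [le_div_iff₀ (by linarith)] at this
        linarith
      -- c * (n - 1 - c) < n - 2 since (1 - c) * (n - 2 - c) > 0
      have h1 : 0 < (1 - c) * ((n : ℝ) - 2 - c) := by
        apply mul_pos <;> nlinarith
      have h2 : c * ((n : ℝ) - 1 - c) < (n : ℝ) - 2 := by nlinarith
      have h3' : k * (c * ((n : ℝ) - 1 - c)) < k * ((n : ℝ) - 2) :=
        mul_lt_mul_of_pos_left h2 hk0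
      nlinarith
  have hc2 : 1 - c ^ 2 ≤ 1 := by nlinarith
  have hDnn : 0 ≤ 4 * (1 - k * (1 - c ^ 2)) + ((n : ℝ) - 1) ^ 2 * k ^ 2 * (1 - c ^ 2) ^ 2 := by
    have ht1 : k * (1 - c ^ 2) ≤ 1 :=
      mul_le_one₀ hk1 (by nlinarith) (by nlinarith)
    have ht2 : 0 ≤ ((n : ℝ) - 1) ^ 2 * k ^ 2 * (1 - c ^ 2) ^ 2 := by positivity
    linarith
  have hDlt : 4 * (1 - k * (1 - c ^ 2)) + ((n : ℝ) - 1) ^ 2 * k ^ 2 * (1 - c ^ 2) ^ 2 < L ^ 2 := by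
    -- L^2 - D = 4 k n (1-c)^2 (1 + k c^2 - (n-1) k c)
    have hfac : L ^ 2 - (4 * (1 - k * (1 - c ^ 2)) + ((n : ℝ) - 1) ^ 2 * k ^ 2 * (1 - c ^ 2) ^ 2)
        = 4 * k * (n : ℝ) * (1 - c) ^ 2 * (1 + k * c ^ 2 - ((n : ℝ) - 1) * k * c) := by
      rw [hLdef]; ring
    have hpos : 0 < 4 * k * (n : ℝ) * (1 - c) ^ 2 * (1 + k * c ^ 2 - ((n : ℝ) - 1) * k * c) := by
      apply mul_pos _ hg
      exact mul_pos (by positivity) (pow_pos (by linarith) 2)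
    linarith
  have hsqrt : Real.sqrt (4 * (1 - k * (1 - c ^ 2)) + ((n : ℝ) - 1) ^ 2 * k ^ 2 * (1 - c ^ 2) ^ 2)
      < L := (Real.sqrt_lt' hL).mpr hDlt
  rw [hcos2, hs2, hs4]
  have h2n : (0 : ℝ) < 2 * (n : ℝ) := by linarith
  rw [sub_pos, ← sub_pos]
  have : (((n : ℝ) - 1) * (2 - k * (1 - c ^ 2)) +
      Real.sqrt (4 * (1 - k * (1 - c ^ 2)) + ((n : ℝ) - 1) ^ 2 * k ^ 2 * (1 - c ^ 2) ^ 2)) /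
      (2 * (n : ℝ)) < 1 + k * c ^ 2 - k * c := by
    rw [div_lt_iff₀ h2n]
    nlinarith [hsqrt]
  linarith
end

section
/- Let n ≥ 2, θ ∈ (0,π), and 0 < k ≤ 1/(n-2) (or 0 < k ≤ 1 if n = 2). Then (2 - k sin²θ) + n k (1 - |cos θ|)² > sqrt(4(1 - k sin²θ) + (n-1)² k² sin⁴θ). -/
open Real

theorem stmt_5 (n : ℕ) (hn : 2 ≤ n) (θ k : ℝ) (hθ : θ ∈ Set.Ioo 0 Real.pi)
    (hk0 : 0 < k) (hk2 : n = 2 → k ≤ 1) (hk3 : 3 ≤ n → k ≤ 1 / ((n : ℝ) - 2)) :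
    Real.sqrt (4 * (1 - k * Real.sin θ ^ 2) + ((n : ℝ) - 1) ^ 2 * k ^ 2 * Real.sin θ ^ 4) <
      (2 - k * Real.sin θ ^ 2) + (n : ℝ) * k * (1 - |Real.cos θ|) ^ 2 := by
  obtain ⟨hθ1, hθ2⟩ := hθ
  have hs : 0 < Real.sin θ := Real.sin_pos_of_pos_of_lt_pi hθ1 hθ2
  set s := Real.sin θ with hsdef
  set a := |Real.cos θ| with hadef
  have ha0 : 0 ≤ a := abs_nonneg _
  have hac : a ^ 2 = Real.cos θ ^ 2 := sq_abs _
  have hs2 : s ^ 2 = 1 - a ^ 2 := by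
    have := Real.sin_sq_add_cos_sq θ
    nlinarith
  have hs4 : s ^ 4 = (1 - a ^ 2) ^ 2 := by
    rw [show s ^ 4 = (s ^ 2) ^ 2 by ring, hs2]
  have ha1 : a < 1 := by nlinarith
  have hn2 : (2 : ℝ) ≤ (n : ℝ) := by exact_mod_cast hn
  have hk1 : k ≤ 1 := by
    rcases eq_or_lt_of_le hn with h | h
    · exact hk2 h.symm
    · have h3 : 3 ≤ n := h
      have h3' : (3 : ℝ) ≤ (n : ℝ) := by exact_mod_cast h3
      have := hk3 h3
      calc k ≤ 1 / ((n : ℝ) - 2) := hk3 h3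
        _ ≤ 1 := by rw [div_le_one (by linarith)]; linarith
  have hkn : k * ((n : ℝ) - 2) ≤ 1 := by
    rcases eq_or_lt_of_le hn with h | h
    · rw [← h]; norm_num
    · have h3 : 3 ≤ n := h
      have h3' : (3 : ℝ) ≤ (n : ℝ) := by exact_mod_cast h3
      have hk := hk3 h3
      calc k * ((n : ℝ) - 2) ≤ (1 / ((n : ℝ) - 2)) * ((n : ℝ) - 2) := by nlinarith
        _ = 1 := one_div_mul_cancel (ne_of_gt (by linarith : (0:ℝ) < (n:ℝ) - 2))
  have hB : 0 < (n : ℝ) * k * (1 - a) ^ 2 := by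
    have h1 : 0 < (1 - a) ^ 2 := by nlinarith
    have hn0 : 0 < (n : ℝ) := by linarith
    exact mul_pos (mul_pos hn0 hk0) h1
  have hP : 0 < 1 - a * k * ((n : ℝ) - 1 - a) := by
    nlinarith [mul_nonneg ha0 (sub_nonneg.2 hkn), mul_nonneg (mul_nonneg ha0 (sub_nonneg.2 ha1.le)) (sub_nonneg.2 hk1), sq_nonneg (1 - a)]
  have hy : 0 < (2 - k * s ^ 2) + (n : ℝ) * k * (1 - a) ^ 2 := by nlinarith
  rw [Real.sqrt_lt' hy]
  rw [hs4, hs2]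
  nlinarith [mul_pos hB hP]
end

section
/- Let ν ∈ ℝ^{n+1} be a unit vector, θ ∈ (0,π), k ∈ (0,1], and let ν_θ = (cos θ, 0, …, 0, sin θ) ∈ ℝ^{n+1}. Then g²_{θ,k}(ν) := 1 - ν₁² - ν_{n+1}² + k(ν₁ - cos θ)² ≤ |ν - ν_θ|². -/
open Real

namespace EuclideanSpace

variable {ι : Type*} [Fintype ι] [DecidableEq ι]

theorem inner_single_add_single_right (x : EuclideanSpace ℝ ι) (i j : ι) (a b : ℝ) :
    inner ℝ x (single i a + single j b) = a * x i + b * x j := by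
  simp [inner_add_right, inner_single_right]

theorem norm_single_add_single_sq {i j : ι} (hij : i ≠ j) (a b : ℝ) :
    ‖single i a + single j b‖ ^ 2 = a ^ 2 + b ^ 2 := by
  rw [← real_inner_self_eq_norm_sq, inner_single_add_single_right]
  simp only [PiLp.add_apply, PiLp.single_eq_same, ne_eq, hij, hij.symm, not_false_eq_true,
    PiLp.single_eq_of_ne, add_zero, zero_add]
  ring

theorem norm_sub_single_add_single_sq (x : EuclideanSpace ℝ ι) {i j : ι} (hij : i ≠ j)
    (a b : ℝ) :
    ‖x - (single i a + single j b)‖ ^ 2 =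
      ‖x‖ ^ 2 - x i ^ 2 - x j ^ 2 + (x i - a) ^ 2 + (x j - b) ^ 2 := by
  rw [norm_sub_sq_real, inner_single_add_single_right, norm_single_add_single_sq hij]
  ring

end EuclideanSpace

theorem stmt_9_general (n : ℕ) (hn : 2 ≤ n) (θ k : ℝ)
    (hk : k ∈ Set.Ioc (0 : ℝ) 1)
    (ν : EuclideanSpace ℝ (Fin (n + 1))) (hν : ‖ν‖ = 1) :
    1 - (ν 0) ^ 2 - (ν (Fin.last n)) ^ 2 + k * (ν 0 - Real.cos θ) ^ 2 ≤
      ‖ν - (EuclideanSpace.single 0 (Real.cos θ) +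
        EuclideanSpace.single (Fin.last n) (Real.sin θ))‖ ^ 2 := by
  have h0_ne_last : (0 : Fin (n + 1)) ≠ Fin.last n := by
    simpa [Fin.ext_iff] using (by omega : 0 ≠ n)
  rw [EuclideanSpace.norm_sub_single_add_single_sq ν h0_ne_last, hν]
  linarith [mul_le_of_le_one_left (sq_nonneg (ν 0 - Real.cos θ)) hk.2,
    sq_nonneg (ν (Fin.last n) - Real.sin θ)]

theorem stmt_9 (n : ℕ) (hn : 2 ≤ n) (θ k : ℝ) (hθ : θ ∈ Set.Ioo 0 Real.pi)
    (hk : k ∈ Set.Ioc (0 : ℝ) 1)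
    (ν : EuclideanSpace ℝ (Fin (n + 1))) (hν : ‖ν‖ = 1) :
    1 - (ν 0) ^ 2 - (ν (Fin.last n)) ^ 2 + k * (ν 0 - Real.cos θ) ^ 2 ≤
      ‖ν - (EuclideanSpace.single 0 (Real.cos θ) +
        EuclideanSpace.single (Fin.last n) (Real.sin θ))‖ ^ 2 :=
  stmt_9_general n hn θ k hk ν hν
end

section
/- Let ν ∈ ℝ^{n+1} be a unit vector, θ ∈ (0,π), and ν_θ = (cos θ, 0,…,0, sin θ). If g²_{θ,k}(ν) = 1 - ν₁² - ν_{n+1}² + k(ν₁-cos θ)² with k ∈ (0,1] and if ν_{n+1} ≥ 0, then |ν_{n+1} - sin θ| ≤ (4/(√k · sin θ)) · g_{θ,k}(ν), provided g_{θ,k}(ν) ≤ 1. -/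
open Real

theorem stmt_10 (n : ℕ) (hn : 2 ≤ n) (θ k : ℝ) (hθ : θ ∈ Set.Ioo 0 Real.pi)
    (hk : k ∈ Set.Ioc (0 : ℝ) 1)
    (ν : EuclideanSpace ℝ (Fin (n + 1))) (hν : ‖ν‖ = 1)
    (hlast : 0 ≤ ν (Fin.last n))
    (hg : Real.sqrt (1 - (ν 0) ^ 2 - (ν (Fin.last n)) ^ 2 + k * (ν 0 - Real.cos θ) ^ 2) ≤ 1) :
    |ν (Fin.last n) - Real.sin θ| ≤
      4 / (Real.sqrt k * Real.sin θ) *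
        Real.sqrt (1 - (ν 0) ^ 2 - (ν (Fin.last n)) ^ 2 + k * (ν 0 - Real.cos θ) ^ 2) := by
  obtain ⟨hθ0, hθπ⟩ := hθ
  obtain ⟨hk0, hk1⟩ := hk
  have hs : 0 < Real.sin θ := Real.sin_pos_of_pos_of_lt_pi hθ0 hθπ
  set a := ν 0 with ha
  set b := ν (Fin.last n) with hb
  set c := Real.cos θ with hc
  set s := Real.sin θ with hsdef
  set E := 1 - a ^ 2 - b ^ 2 + k * (a - c) ^ 2 with hEdef
  set g := Real.sqrt E with hgdef
  have hcs : c ^ 2 + s ^ 2 = 1 := by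
    rw [hc, hsdef]; exact Real.cos_sq_add_sin_sq θ
  have hsum : ∑ i : Fin (n + 1), (ν i) ^ 2 = 1 := by
    have h := EuclideanSpace.norm_eq ν
    rw [hν] at h
    have h2 : ∑ i : Fin (n + 1), ‖ν i‖ ^ 2 = 1 := Real.sqrt_eq_one.mp h.symm
    simpa [Real.norm_eq_abs, sq_abs] using h2
  have h0last : (0 : Fin (n + 1)) ≠ Fin.last n := by
    intro h
    have h' : (0 : ℕ) = n := by simpa [Fin.ext_iff] using h
    omega
  have hab : a ^ 2 + b ^ 2 ≤ 1 := by
    have hp : ∑ i ∈ ({0, Fin.last n} : Finset (Fin (n + 1))), (ν i) ^ 2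
        = (ν 0) ^ 2 + (ν (Fin.last n)) ^ 2 := Finset.sum_pair h0last
    have hle := Finset.sum_le_sum_of_subset_of_nonneg
      (Finset.subset_univ ({0, Fin.last n} : Finset (Fin (n + 1))))
      (fun i _ _ => sq_nonneg (ν i))
    rw [hsum, hp] at hle
    rw [ha, hb]
    exact hle
  have hE : 0 ≤ E := by nlinarith [sq_nonneg (a - c), hk0.le, mul_nonneg hk0.le (sq_nonneg (a - c))]
  have hg2 : g ^ 2 = E := Real.sq_sqrt hE
  have hgnn : 0 ≤ g := Real.sqrt_nonneg _
  have hknn : 0 ≤ Real.sqrt k := Real.sqrt_nonneg _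
  have hk1' : Real.sqrt k ≤ 1 := by
    rw [show (1 : ℝ) = Real.sqrt 1 from Real.sqrt_one.symm]
    exact Real.sqrt_le_sqrt hk1
  have hkpos : 0 < Real.sqrt k := Real.sqrt_pos.mpr hk0
  have hkE : k * (a - c) ^ 2 ≤ E := by nlinarith
  have hkac : Real.sqrt k * |a - c| ≤ g := by
    calc Real.sqrt k * |a - c| = Real.sqrt (k * (a - c) ^ 2) := by
          rw [Real.sqrt_mul hk0.le, Real.sqrt_sq_eq_abs]
      _ ≤ g := Real.sqrt_le_sqrt hkE
  have hkac2 : k * (a - c) ^ 2 ≤ g ^ 2 := by rw [hg2]; exact hkE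
  have ha1 : |a| ≤ 1 := abs_le.mpr ⟨by nlinarith, by nlinarith⟩
  have hc1 : |c| ≤ 1 := by rw [hc]; exact Real.abs_cos_le_one θ
  have hac2 : |a + c| ≤ 2 :=
    calc |a + c| ≤ |a| + |c| := abs_add_le _ _
      _ ≤ 2 := by linarith
  have heq : b ^ 2 - s ^ 2 = (c - a) * (c + a) + k * (a - c) ^ 2 - E := by
    rw [hEdef]; linear_combination -hcs
  have habs : |b ^ 2 - s ^ 2| ≤ |a - c| * 2 + k * (a - c) ^ 2 + E := by
    rw [heq]
    calc |(c - a) * (c + a) + k * (a - c) ^ 2 - E|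
        ≤ |(c - a) * (c + a) + k * (a - c) ^ 2| + |E| := abs_sub _ _
      _ ≤ |(c - a) * (c + a)| + |k * (a - c) ^ 2| + |E| := by
          linarith [abs_add_le ((c - a) * (c + a)) (k * (a - c) ^ 2)]
      _ = |a - c| * |a + c| + k * (a - c) ^ 2 + E := by
          rw [abs_mul, abs_sub_comm c a, abs_of_nonneg (mul_nonneg hk0.le (sq_nonneg (a - c))),
            abs_of_nonneg hE]
          ring_nf
      _ ≤ |a - c| * 2 + k * (a - c) ^ 2 + E := by
          have := mul_le_mul_of_nonneg_left hac2 (abs_nonneg (a - c))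
          linarith
  have h2 : Real.sqrt k * |b ^ 2 - s ^ 2| ≤ 4 * g := by
    calc Real.sqrt k * |b ^ 2 - s ^ 2|
        ≤ Real.sqrt k * (|a - c| * 2 + k * (a - c) ^ 2 + E) :=
          mul_le_mul_of_nonneg_left habs hknn
      _ = 2 * (Real.sqrt k * |a - c|) + Real.sqrt k * (k * (a - c) ^ 2) + Real.sqrt k * E := by
          ring
      _ ≤ 2 * g + g ^ 2 + g ^ 2 := by
          have h3 : Real.sqrt k * (k * (a - c) ^ 2) ≤ g ^ 2 :=
            (mul_le_of_le_one_left (mul_nonneg hk0.le (sq_nonneg (a - c))) hk1').trans hkac2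
          have h4 : Real.sqrt k * E ≤ g ^ 2 :=
            (mul_le_of_le_one_left hE hk1').trans_eq hg2.symm
          linarith [mul_le_mul_of_nonneg_left hkac (by norm_num : (0:ℝ) ≤ 2)]
      _ ≤ 4 * g := by
          have hgg : g ^ 2 ≤ g := by
            calc g ^ 2 = g * g := sq g
              _ ≤ 1 * g := mul_le_mul_of_nonneg_right hg hgnn
              _ = g := one_mul g
          linarith
  have key : |b - s| * (Real.sqrt k * s) ≤ 4 * g := by
    have hbs : |b - s| * (b + s) = |b ^ 2 - s ^ 2| := by
      rw [← abs_of_nonneg (show (0 : ℝ) ≤ b + s by linarith), ← abs_mul]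
      ring_nf
    have h1 : |b - s| * s ≤ |b ^ 2 - s ^ 2| := by
      rw [← hbs]
      exact mul_le_mul_of_nonneg_left (by linarith) (abs_nonneg _)
    calc |b - s| * (Real.sqrt k * s) = Real.sqrt k * (|b - s| * s) := by ring
      _ ≤ Real.sqrt k * |b ^ 2 - s ^ 2| := mul_le_mul_of_nonneg_left h1 hknn
      _ ≤ 4 * g := h2
  rw [div_mul_eq_mul_div, le_div_iff₀ (by positivity : (0 : ℝ) < Real.sqrt k * s)]
  linarith [key]
end

section
/- Let ν ∈ ℝ^{n+1} be a unit vector with ν_{n+1} > sin θ / 2 for some θ ∈ (0,π). Let u be the gradient vector Du = (-ν₁/ν_{n+1}, …, -νₙ/ν_{n+1}) ∈ ℝⁿ. Then |Du + cot θ · e₁|² ≤ (4/sin²θ)(3 + 2cot²θ) · |ν - ν_θ|², where ν_θ = (cos θ, 0,…,0, sin θ). -/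
/-!
With `w = ν - ν_θ`, the `i`-th component of `Du + cot θ e₁` equals
`-(sin θ wᵢ - δᵢ₁ cos θ w_{n+1}) / (sin θ ν_{n+1})`. Since `sin² θ + cos² θ = 1`,
Cauchy–Schwarz makes `w ↦ (sin θ wᵢ - δᵢ₁ cos θ w_{n+1})ᵢ` a contraction, and
`ν_{n+1} > sin θ / 2` bounds the denominator from below by `sin² θ / 2`.
This gives the sharper constant `4 / sin⁴ θ`.
-/

open Real

lemma sq_mul_sub_mul_le {a b : ℝ} (hab : a ^ 2 + b ^ 2 = 1) (x y : ℝ) :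
    (a * x - b * y) ^ 2 ≤ x ^ 2 + y ^ 2 := by
  -- Lagrange: `(a x - b y)² + (b x + a y)² = (a² + b²)(x² + y²)`
  nlinarith [sq_nonneg (b * x + a * y)]

lemma sq_mul_sub_ite_le {a b : ℝ} (hab : a ^ 2 + b ^ 2 = 1) (p : Prop) [Decidable p] (x y : ℝ) :
    (a * x - if p then b * y else 0) ^ 2 ≤ x ^ 2 + if p then y ^ 2 else 0 := by
  split_ifs
  · exact sq_mul_sub_mul_le hab x y
  · nlinarith [sq_nonneg b, sq_nonneg x, mul_nonneg (sq_nonneg b) (sq_nonneg x)]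

lemma Fin.sum_ite_val_eq_zero_le {n : ℕ} {t : ℝ} (ht : 0 ≤ t) :
    ∑ i : Fin n, (if (i : ℕ) = 0 then t else 0) ≤ t := by
  cases n with
  | zero => simpa using ht
  | succ k => simp

lemma sum_sq_mul_castSucc_sub_le_norm_sq {n : ℕ} {a b : ℝ} (hab : a ^ 2 + b ^ 2 = 1)
    (w : EuclideanSpace ℝ (Fin (n + 1))) :
    ∑ i : Fin n, (a * w i.castSucc - if (i : ℕ) = 0 then b * w (Fin.last n) else 0) ^ 2 ≤
      ‖w‖ ^ 2 := by
  rw [EuclideanSpace.norm_sq_eq, Fin.sum_univ_castSucc]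
  simp only [Real.norm_eq_abs, sq_abs]
  calc _ ≤ ∑ i : Fin n, (w i.castSucc ^ 2 + if (i : ℕ) = 0 then w (Fin.last n) ^ 2 else 0) :=
        Finset.sum_le_sum fun i _ => sq_mul_sub_ite_le hab _ _ _
    _ = ∑ i : Fin n, w i.castSucc ^ 2 +
          ∑ i : Fin n, (if (i : ℕ) = 0 then w (Fin.last n) ^ 2 else 0) :=
        Finset.sum_add_distrib
    _ ≤ _ := by gcongr; exact Fin.sum_ite_val_eq_zero_le (sq_nonneg _)

lemma inv_sq_mul_le_of_half_lt {s c m : ℝ} (hs : 0 < s) (hcs : c ^ 2 + s ^ 2 = 1)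
    (hm : s / 2 < m) :
    ((s * m) ^ 2)⁻¹ ≤ 4 / s ^ 2 * (3 + 2 * (c / s) ^ 2) := by
  have hK : 4 / s ^ 2 * (3 + 2 * (c / s) ^ 2) = 4 * (2 + s ^ 2) / s ^ 4 := by
    field_simp
    linear_combination 2 * hcs
  calc ((s * m) ^ 2)⁻¹ ≤ ((s * (s / 2)) ^ 2)⁻¹ := by gcongr
    _ = 4 / s ^ 4 := by field_simp; ring
    _ ≤ _ := by rw [hK]; gcongr; nlinarith

theorem stmt_11_general (n : ℕ) (hn : 2 ≤ n) (θ : ℝ) (hθ : θ ∈ Set.Ioo 0 Real.pi)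
    (ν : EuclideanSpace ℝ (Fin (n + 1)))
    (hlast : Real.sin θ / 2 < ν (Fin.last n))
    (Du : Fin n → ℝ) (hDu : ∀ i, Du i = -ν (Fin.castSucc i) / ν (Fin.last n)) :
    ∑ i, (Du i + (Real.cos θ / Real.sin θ) * (if (i : ℕ) = 0 then 1 else 0)) ^ 2 ≤
      (4 / Real.sin θ ^ 2) * (3 + 2 * (Real.cos θ / Real.sin θ) ^ 2) *
        ‖ν - (EuclideanSpace.single 0 (Real.cos θ) +
          EuclideanSpace.single (Fin.last n) (Real.sin θ))‖ ^ 2 := by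
  have hs : 0 < sin θ := sin_pos_of_pos_of_lt_pi hθ.1 hθ.2
  have hm : 0 < ν (Fin.last n) := by linarith
  set w := ν - (EuclideanSpace.single 0 (cos θ) + EuclideanSpace.single (Fin.last n) (sin θ))
  have hw_last : w (Fin.last n) = ν (Fin.last n) - sin θ := by
    have : Fin.last n ≠ 0 := by simp [Fin.ext_iff]; omega
    simp [w, this]
  have hw_castSucc (i : Fin n) :
      w i.castSucc = ν i.castSucc - if (i : ℕ) = 0 then cos θ else 0 := by
    simp [w, Fin.ext_iff, (Fin.castSucc_lt_last i).ne]
  have hterm (i : Fin n) : Du i + cos θ / sin θ * (if (i : ℕ) = 0 then 1 else 0) =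
      -(sin θ * w i.castSucc - if (i : ℕ) = 0 then cos θ * w (Fin.last n) else 0) /
        (sin θ * ν (Fin.last n)) := by
    rw [hDu, hw_castSucc, hw_last]
    split_ifs <;> field_simp <;> ring
  calc ∑ i, (Du i + cos θ / sin θ * (if (i : ℕ) = 0 then 1 else 0)) ^ 2
      = ((sin θ * ν (Fin.last n)) ^ 2)⁻¹ * ∑ i : Fin n,
          (sin θ * w i.castSucc - if (i : ℕ) = 0 then cos θ * w (Fin.last n) else 0) ^ 2 := by
        simp_rw [hterm, Finset.mul_sum, div_pow, neg_sq, div_eq_inv_mul]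
    _ ≤ ((sin θ * ν (Fin.last n)) ^ 2)⁻¹ * ‖w‖ ^ 2 := by
        gcongr; exact sum_sq_mul_castSucc_sub_le_norm_sq (sin_sq_add_cos_sq θ) w
    _ ≤ _ := by
        gcongr; exact inv_sq_mul_le_of_half_lt hs (cos_sq_add_sin_sq θ) hlast

theorem stmt_11 (n : ℕ) (hn : 2 ≤ n) (θ : ℝ) (hθ : θ ∈ Set.Ioo 0 Real.pi)
    (ν : EuclideanSpace ℝ (Fin (n + 1))) (hν : ‖ν‖ = 1)
    (hlast : Real.sin θ / 2 < ν (Fin.last n))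
    (Du : Fin n → ℝ) (hDu : ∀ i, Du i = -ν (Fin.castSucc i) / ν (Fin.last n)) :
    ∑ i, (Du i + (Real.cos θ / Real.sin θ) * (if (i : ℕ) = 0 then 1 else 0)) ^ 2 ≤
      (4 / Real.sin θ ^ 2) * (3 + 2 * (Real.cos θ / Real.sin θ) ^ 2) *
        ‖ν - (EuclideanSpace.single 0 (Real.cos θ) +
          EuclideanSpace.single (Fin.last n) (Real.sin θ))‖ ^ 2 :=
  stmt_11_general n hn θ hθ ν hlast Du hDu
end

section
/- For real numbers |a₁|², |a₂|², |a₃|² ≥ 0 and angles ξ₁, ξ₂, ξ₃ ∈ ℝ, setting B₁ = Σᵢ|aᵢ|²cos²ξᵢ and B₂ = Σᵢ|aᵢ|²sin²ξᵢ, one has B₁·B₂ ≥ Σ_{i<j} |aᵢ|²|aⱼ|² sin²(ξᵢ - ξⱼ). -/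
open Real

theorem stmt_15 (a₁ a₂ a₃ ξ₁ ξ₂ ξ₃ : ℝ) (h₁ : 0 ≤ a₁) (h₂ : 0 ≤ a₂) (h₃ : 0 ≤ a₃) :
    a₁ * a₂ * Real.sin (ξ₁ - ξ₂) ^ 2 + a₁ * a₃ * Real.sin (ξ₁ - ξ₃) ^ 2 +
        a₂ * a₃ * Real.sin (ξ₂ - ξ₃) ^ 2 ≤
      (a₁ * Real.cos ξ₁ ^ 2 + a₂ * Real.cos ξ₂ ^ 2 + a₃ * Real.cos ξ₃ ^ 2) *
        (a₁ * Real.sin ξ₁ ^ 2 + a₂ * Real.sin ξ₂ ^ 2 + a₃ * Real.sin ξ₃ ^ 2) := by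
  rw [Real.sin_sub, Real.sin_sub, Real.sin_sub]
  nlinarith [sq_nonneg (a₁ * Real.sin ξ₁ * Real.cos ξ₁ + a₂ * Real.sin ξ₂ * Real.cos ξ₂ +
      a₃ * Real.sin ξ₃ * Real.cos ξ₃), sq_nonneg (Real.sin ξ₁), sq_nonneg (Real.sin ξ₂)]
end

section
/- Let n ≥ 3 and q > 0. Consider f(x₁,…,xₙ) = (P₃ + (1-q)P₁P₂ - qP₁³)/(P₂ + P₁²)^{3/2} on ℝⁿ \ {0}, where P_k = Σᵢ xᵢ^k. Any critical point of the restriction of f to the unit sphere {P₂ = 1} takes at most two distinct values among the coordinates x₁,…,xₙ. -/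
/-!
The function depends on `x` only through the power sums `P₁, P₂, P₃`, and `∂Pₖ/∂xᵢ = k xᵢ^(k-1)`.
Hence the Lagrange condition at a point reads `α + 2β xᵢ + 3γ xᵢ² + 2λ xᵢ = 0` for every `i`,
where `α, β, γ` are the partial derivatives of `f` in the variables `(P₁, P₂, P₃)`, the same for
all coordinates. Since `f` is affine in `P₃` with slope `(P₂ + P₁²)^(-3/2) ≠ 0`, we get `γ ≠ 0`,
so every coordinate is a root of one nondegenerate quadratic.
-/

open ContinuousLinearMap

theorem exists_pair_of_forall_quadratic_eq_zero {K ι : Type*} [Field K] {a b c : K} (ha : a ≠ 0)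
    {x : ι → K} (hx : ∀ i, a * x i ^ 2 + b * x i + c = 0) :
    ∃ u v : K, ∀ i, x i = u ∨ x i = v := by
  rcases isEmpty_or_nonempty ι with _ | ⟨⟨i₀⟩⟩
  · exact ⟨0, 0, isEmptyElim⟩
  refine ⟨x i₀, -b / a - x i₀, fun i => ?_⟩
  -- Vieta: the second root is `-b/a` minus the first.
  have hfactor : a * ((x i - x i₀) * (x i - (-b / a - x i₀))) = 0 := by
    field_simp
    linear_combination hx i - hx i₀
  simpa [ha, sub_eq_zero] using hfactor

section PowerSums

variable {ι : Type*} [Fintype ι]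

theorem hasFDerivAt_sum_pow (k : ℕ) (x : ι → ℝ) :
    HasFDerivAt (fun y : ι → ℝ => ∑ j, y j ^ k)
      (∑ j, (k * x j ^ (k - 1)) • (proj j : (ι → ℝ) →L[ℝ] ℝ)) x :=
  HasFDerivAt.fun_sum fun j _ => by
    simpa using (hasFDerivAt_apply (𝕜 := ℝ) (F' := fun _ => ℝ) j x).pow k

def powerSums (y : ι → ℝ) : ℝ × ℝ × ℝ :=
  (∑ j, y j, ∑ j, y j ^ 2, ∑ j, y j ^ 3)

theorem hasFDerivAt_powerSums (x : ι → ℝ) :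
    HasFDerivAt powerSums
      ((∑ j, (proj j : (ι → ℝ) →L[ℝ] ℝ)).prod
        ((∑ j, (2 * x j) • proj j).prod (∑ j, (3 * x j ^ 2) • proj j))) x := by
  have hP₁ : HasFDerivAt (fun y : ι → ℝ => ∑ j, y j) (∑ j, (proj j : (ι → ℝ) →L[ℝ] ℝ)) x := by
    simpa using hasFDerivAt_sum_pow 1 x
  have hP₂₃ := (hasFDerivAt_sum_pow 2 x).prodMk (hasFDerivAt_sum_pow 3 x)
  norm_num at hP₂₃
  exact hP₁.prodMk hP₂₃

theorem fderiv_comp_powerSums_apply_single [DecidableEq ι] {F : ℝ × ℝ × ℝ → ℝ}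
    {F' : ℝ × ℝ × ℝ →L[ℝ] ℝ} {x : ι → ℝ} (hF : HasFDerivAt F F' (powerSums x)) (i : ι) :
    fderiv ℝ (fun y => F (powerSums y)) x (Pi.single i 1) =
      F' (1, 0, 0) + 2 * x i * F' (0, 1, 0) + 3 * x i ^ 2 * F' (0, 0, 1) := by
  have hcomp : HasFDerivAt (fun y => F (powerSums y)) _ x := hF.comp x (hasFDerivAt_powerSums x)
  rw [hcomp.fderiv]
  have hP' : ((∑ j, (proj j : (ι → ℝ) →L[ℝ] ℝ)).prod ((∑ j, (2 * x j) • proj j).prod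
      (∑ j, (3 * x j ^ 2) • proj j))) (Pi.single i 1) =
      ((1, 0, 0) + (2 * x i) • (0, 1, 0) + (3 * x i ^ 2) • (0, 0, 1) : ℝ × ℝ × ℝ) := by
    simp [Pi.single_apply]
  rw [comp_apply, hP', map_add, map_add, map_smul, map_smul, smul_eq_mul, smul_eq_mul]

theorem exists_pair_of_lagrange_critical_comp_powerSums [DecidableEq ι] {F : ℝ × ℝ × ℝ → ℝ}
    {F' : ℝ × ℝ × ℝ →L[ℝ] ℝ} {x : ι → ℝ} (hF : HasFDerivAt F F' (powerSums x))
    (hF₃ : F' (0, 0, 1) ≠ 0) {lam : ℝ}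
    (hcrit : ∀ i, fderiv ℝ (fun y => F (powerSums y)) x (Pi.single i 1) + 2 * lam * x i = 0) :
    ∃ a b : ℝ, ∀ i, x i = a ∨ x i = b := by
  refine exists_pair_of_forall_quadratic_eq_zero (mul_ne_zero three_ne_zero hF₃)
    (b := 2 * F' (0, 1, 0) + 2 * lam) (c := F' (1, 0, 0)) fun i => ?_
  linear_combination hcrit i - fderiv_comp_powerSums_apply_single hF i

end PowerSums

noncomputable def objectiveOfPowerSums (q : ℝ) (p : ℝ × ℝ × ℝ) : ℝ :=
  (p.2.2 + (1 - q) * p.1 * p.2.1 - q * p.1 ^ 3) / (p.2.1 + p.1 ^ 2) ^ ((3 : ℝ) / 2)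

section Objective

variable (q : ℝ) {p : ℝ × ℝ × ℝ}

theorem differentiableAt_objectiveOfPowerSums (hp : 0 < p.2.1 + p.1 ^ 2) :
    DifferentiableAt ℝ (objectiveOfPowerSums q) p := by
  unfold objectiveOfPowerSums
  fun_prop (disch := positivity)

theorem fderiv_objectiveOfPowerSums_apply_third (hp : 0 < p.2.1 + p.1 ^ 2) :
    fderiv ℝ (objectiveOfPowerSums q) p (0, 0, 1) = ((p.2.1 + p.1 ^ 2) ^ ((3 : ℝ) / 2))⁻¹ := by
  set c := (p.2.1 + p.1 ^ 2) ^ ((3 : ℝ) / 2)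
  set line := fun t : ℝ => p + t • ((0, 0, 1) : ℝ × ℝ × ℝ)
  have hline : HasDerivAt line (0, 0, 1) 0 := by
    simpa only [id, one_smul] using
      ((hasDerivAt_id (0 : ℝ)).smul_const ((0, 0, 1) : ℝ × ℝ × ℝ)).const_add p
  have hF_line : objectiveOfPowerSums q ∘ line =
      fun t => (t + (p.2.2 + (1 - q) * p.1 * p.2.1 - q * p.1 ^ 3)) / c := by
    funext t
    simp only [objectiveOfPowerSums, c, line, Function.comp_apply, Prod.fst_add, Prod.snd_add,
      Prod.smul_mk, smul_eq_mul]
    ring_nf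
  have hderiv : HasDerivAt (objectiveOfPowerSums q ∘ line) c⁻¹ 0 := by
    simpa [hF_line] using ((hasDerivAt_id (0 : ℝ)).add_const _).div_const c
  exact ((differentiableAt_objectiveOfPowerSums q hp).hasFDerivAt.comp_hasDerivAt_of_eq 0 hline
    (by simp [line])).unique hderiv

end Objective

theorem stmt_16_general (n : ℕ) (q : ℝ)
    (x : Fin n → ℝ) (hx : ∑ i, (x i) ^ 2 = 1) (lam : ℝ)
    (hcrit : ∀ i, fderiv ℝ (fun y : Fin n → ℝ =>
        ((∑ j, (y j) ^ 3) + (1 - q) * (∑ j, y j) * (∑ j, (y j) ^ 2) - q * (∑ j, y j) ^ 3) /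
          ((∑ j, (y j) ^ 2) + (∑ j, y j) ^ 2) ^ ((3 : ℝ) / 2)) x (Pi.single i 1) +
        2 * lam * x i = 0) :
    ∃ a b : ℝ, ∀ i, x i = a ∨ x i = b := by
  have hp : 0 < (powerSums x).2.1 + (powerSums x).1 ^ 2 := by
    simp only [powerSums, hx]
    positivity
  have hF₃ : fderiv ℝ (objectiveOfPowerSums q) (powerSums x) (0, 0, 1) ≠ 0 := by
    rw [fderiv_objectiveOfPowerSums_apply_third q hp]
    positivity
  exact exists_pair_of_lagrange_critical_comp_powerSums
    (differentiableAt_objectiveOfPowerSums q hp).hasFDerivAt hF₃ hcrit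

/-- Critical points of `f = (P₃ + (1-q)P₁P₂ - qP₁³)/(P₂+P₁²)^{3/2}` restricted to the
unit sphere `{P₂ = 1}` (in the sense of the Lagrange multiplier condition) take at most
two distinct values among their coordinates. -/
theorem stmt_16 (n : ℕ) (hn : 3 ≤ n) (q : ℝ) (hq : 0 < q)
    (x : Fin n → ℝ) (hx : ∑ i, (x i) ^ 2 = 1) (lam : ℝ)
    (hcrit : ∀ i, fderiv ℝ (fun y : Fin n → ℝ =>
        ((∑ j, (y j) ^ 3) + (1 - q) * (∑ j, y j) * (∑ j, (y j) ^ 2) - q * (∑ j, y j) ^ 3) /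
          ((∑ j, (y j) ^ 2) + (∑ j, y j) ^ 2) ^ ((3 : ℝ) / 2)) x (Pi.single i 1) +
        2 * lam * x i = 0) :
    ∃ a b : ℝ, ∀ i, x i = a ∨ x i = b :=
  stmt_16_general n q x hx lam hcrit
end
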